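/- arXiv:1612.06801 — 2 statements merged into one kernel-verified Lean document; each statement's English description precedes it below -/
import Mathlib

section
/- Let s, ℓ be positive integers with gcd(s, ℓ) = 1, and let j, k ∈ {0, 1, …, s−1}. If for some real t both cos((t+2πj)/s) = cos((t+2πk)/s) and sin(ℓ(t+2πj)/s) = sin(ℓ(t+2πk)/s), then j = k. In other words, distinct strands of the lemniscate braid never intersect. -/
theorem stmt_1 (s ℓ : ℕ) (hs : 0 < s) (hℓ : 0 < ℓ) (hcop : Nat.gcd s ℓ = 1)
    (j k : ℕ) (hj : j < s) (hk : k < s) (t : ℝ)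
    (hcos : Real.cos ((t + 2 * Real.pi * j) / s) = Real.cos ((t + 2 * Real.pi * k) / s))
    (hsin : Real.sin (ℓ * (t + 2 * Real.pi * j) / s) = Real.sin (ℓ * (t + 2 * Real.pi * k) / s)) :
    j = k := by
  have hπ : (Real.pi : ℝ) ≠ 0 := Real.pi_ne_zero
  have h2π : (2 * Real.pi : ℝ) ≠ 0 := by positivity
  have hs' : (s : ℝ) ≠ 0 := Nat.cast_ne_zero.mpr hs.ne'
  have key : ∀ (a b : ℕ), a < s → b < s → (s : ℤ) ∣ ((a : ℤ) - b) → a = b := by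
    intro a b ha hb hd
    have := Int.eq_zero_of_abs_lt_dvd hd (by
      rw [abs_sub_lt_iff]; constructor <;> push_cast <;> omega)
    omega
  obtain ⟨n, hn | hn⟩ := Real.cos_eq_cos_iff.mp hcos
  · -- (t+2πk)/s = 2nπ + (t+2πj)/s ⇒ k - j = n s
    field_simp at hn
    have hq : 2 * Real.pi * ((k : ℝ) - j) = 2 * Real.pi * (n * s) := by
      linear_combination hn
    have h1 : ((k : ℝ) - j) = n * s := mul_left_cancel₀ h2π hq
    have h2 : (k : ℤ) - j = n * s := by exact_mod_cast h1
    exact (key k j hk hj ⟨n, by linarith [h2]⟩).symm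
  · -- sum case: (t+2πk)/s + (t+2πj)/s = 2nπ
    obtain ⟨m, hm | hm⟩ := Real.sin_eq_sin_iff.mp hsin
    · -- ℓ(k-j) = m s
      field_simp at hm
      have hq : 2 * Real.pi * ((ℓ : ℝ) * ((k : ℝ) - j)) = 2 * Real.pi * (m * s) := by
        linear_combination hm
      have h1 : (ℓ : ℝ) * ((k : ℝ) - j) = m * s := mul_left_cancel₀ h2π hq
      have h2 : (ℓ : ℤ) * ((k : ℤ) - j) = m * s := by exact_mod_cast h1
      have hd : (s : ℤ) ∣ (ℓ : ℤ) * ((k : ℤ) - j) := ⟨m, by linarith [h2]⟩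
      have hcop' : IsCoprime (s : ℤ) (ℓ : ℤ) := by
        rw [Int.isCoprime_iff_gcd_eq_one]
        simpa using hcop
      exact (key k j hk hj (hcop'.dvd_of_dvd_mul_left hd)).symm
    · -- contradiction: 2ℓn = 2m+1
      exfalso
      field_simp at hn hm
      -- hn : t + 2πk = 2nπs - (t+2πj)
      -- hm : ℓ(t+2πk) = (2m+1)πs - ℓ(t+2πj)
      have hq : ((ℓ : ℝ) * (2 * n)) * (Real.pi * s) = (2 * m + 1) * (Real.pi * s) := by
        linear_combination hm - (ℓ : ℝ) * hn
      have h1 : (ℓ : ℝ) * (2 * n) = 2 * m + 1 :=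
        mul_right_cancel₀ (mul_ne_zero hπ hs') hq
      have h2 : (ℓ : ℤ) * (2 * n) = 2 * m + 1 := by exact_mod_cast h1
      have heven : (2 : ℤ) ∣ 2 * m + 1 := h2 ▸ ⟨ℓ * n, by ring⟩
      omega
end

section
/- Let p, q ≥ 1 be coprime integers and let (r₁, r₂) be the unique positive reals with r₁^p = r₂^q and r₁² + r₂² = 1. Then {(u, v) ∈ ℂ² : |u|² + |v|² = 1 and u^p = v^q} = {(r₁·e^{iqθ}, r₂·e^{ipθ}) : θ ∈ ℝ}. -/
/-!
By coprimality, `u ^ p = v ^ q` holds exactly when `(u, v) = (c ^ q, c ^ p)` for some `c : ℂ`, and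
likewise `r₁ = ρ ^ q`, `r₂ = ρ ^ p` for some `ρ ≥ 0`. The sphere condition
`‖c‖ ^ (2q) + ‖c‖ ^ (2p) = 1` is strictly increasing in `‖c‖`, so it pins down `‖c‖ = ρ`; writing
`c = ρ e^{iθ}` gives the parametrization.
-/

open Complex

lemma strictMonoOn_pow_add_pow {m n : ℕ} (hm : m ≠ 0) :
    StrictMonoOn (fun x : ℝ => x ^ m + x ^ n) {x | 0 ≤ x} :=
  (pow_left_strictMonoOn₀ hm).add_monotone fun _ hx _ _ hxy => pow_le_pow_left₀ hx hxy n

lemma exists_nonneg_eq_pow_of_pow_eq_pow {p q : ℕ} (hcop : p.Coprime q) {r₁ r₂ : ℝ}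
    (hr₁ : 0 ≤ r₁) (hr₂ : 0 ≤ r₂) (h : r₁ ^ p = r₂ ^ q) :
    ∃ ρ : ℝ, 0 ≤ ρ ∧ r₁ = ρ ^ q ∧ r₂ = ρ ^ p := by
  obtain ⟨s, rfl, rfl⟩ := (pow_eq_pow_iff_of_coprime hcop).1 h
  exact ⟨|s|, abs_nonneg s, by rw [← abs_pow, abs_of_nonneg hr₁],
    by rw [← abs_pow, abs_of_nonneg hr₂]⟩

lemma ofReal_mul_exp_mul_I_pow (ρ θ : ℝ) (n : ℕ) :
    ((ρ : ℂ) * exp (θ * I)) ^ n = ((ρ ^ n : ℝ) : ℂ) * exp (I * n * θ) := by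
  rw [mul_pow, ← exp_nat_mul]
  push_cast
  ring_nf

lemma norm_ofReal_mul_exp_mul_I {ρ : ℝ} (hρ : 0 ≤ ρ) (θ : ℝ) :
    ‖(ρ : ℂ) * exp (θ * I)‖ = ρ := by
  rw [norm_mul, norm_exp_ofReal_mul_I, mul_one, norm_real, Real.norm_of_nonneg hρ]

theorem stmt_14_general (p q : ℕ) (hq : 1 ≤ q) (hcop : Nat.Coprime p q)
    (r₁ r₂ : ℝ) (hr₁ : 0 < r₁) (hr₂ : 0 < r₂)
    (hpq : r₁ ^ p = r₂ ^ q) (hsum : r₁ ^ 2 + r₂ ^ 2 = 1) :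
    {uv : ℂ × ℂ | ‖uv.1‖ ^ 2 + ‖uv.2‖ ^ 2 = 1 ∧ uv.1 ^ p = uv.2 ^ q} =
    {uv : ℂ × ℂ | ∃ θ : ℝ,
      uv = ((r₁ : ℂ) * Complex.exp (Complex.I * (q : ℂ) * (θ : ℂ)),
            (r₂ : ℂ) * Complex.exp (Complex.I * (p : ℂ) * (θ : ℂ)))} := by
  obtain ⟨ρ, hρ, rfl, rfl⟩ := exists_nonneg_eq_pow_of_pow_eq_pow hcop hr₁.le hr₂.le hpq
  have hmono := strictMonoOn_pow_add_pow (m := q * 2) (n := p * 2) (by omega)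
  ext ⟨u, v⟩
  simp only [Set.mem_ofPred_eq, pow_eq_pow_iff_of_coprime hcop, Prod.mk.injEq]
  constructor
  · rintro ⟨hnorm, c, rfl, rfl⟩
    have hc : ‖c‖ = ρ := hmono.injOn (norm_nonneg c) hρ <| by
      simp only [pow_mul, ← norm_pow] at hnorm ⊢
      rw [hnorm, hsum]
    refine ⟨c.arg, ?_⟩
    rw [← ofReal_mul_exp_mul_I_pow, ← ofReal_mul_exp_mul_I_pow, ← hc, norm_mul_exp_arg_mul_I]
    exact ⟨rfl, rfl⟩
  · rintro ⟨θ, rfl, rfl⟩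
    rw [← ofReal_mul_exp_mul_I_pow, ← ofReal_mul_exp_mul_I_pow, norm_pow, norm_pow,
      norm_ofReal_mul_exp_mul_I hρ]
    exact ⟨hsum, _, rfl, rfl⟩

theorem stmt_14 (p q : ℕ) (hp : 1 ≤ p) (hq : 1 ≤ q) (hcop : Nat.Coprime p q)
    (r₁ r₂ : ℝ) (hr₁ : 0 < r₁) (hr₂ : 0 < r₂)
    (hpq : r₁ ^ p = r₂ ^ q) (hsum : r₁ ^ 2 + r₂ ^ 2 = 1) :
    {uv : ℂ × ℂ | ‖uv.1‖ ^ 2 + ‖uv.2‖ ^ 2 = 1 ∧ uv.1 ^ p = uv.2 ^ q} =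
    {uv : ℂ × ℂ | ∃ θ : ℝ,
      uv = ((r₁ : ℂ) * Complex.exp (Complex.I * (q : ℂ) * (θ : ℂ)),
            (r₂ : ℂ) * Complex.exp (Complex.I * (p : ℂ) * (θ : ℂ)))} :=
  stmt_14_general p q hq hcop r₁ r₂ hr₁ hr₂ hpq hsum
end
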